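/- Sum form of Gupta's formula: take r_{(j)} := r_{i_j}, the sign-coherent vectors c_j^+ and ĉ_j^+ := B_0·c_j^+ from the generalized cluster pattern, and m_{l,j} := (ĉ_l^+, −d_{(j)}·c_j)_{D_0R}, assumed integers; assume also each h_j := −(g_K, d_{(j)}·c_j)_{D_0R} is an integer, where g_K := g_{i_K;K}. Then for every N ∈ ℕ^n the coefficient of u^N in ∏_{j=1}^K L_j^{h_j} (which represents the F-polynomial F_{i_K;t_K}(ŷ,z), with u_i in place of ŷ_i, by Gupta's formula) equals the sum, over all families of nonnegative integers (n_s^j)_{1 ≤ j ≤ K, 0 ≤ s ≤ r_{(j)}} with ∑_{j=1}^K (∑_{s=1}^{r_{(j)}} s·n_s^j)·c_j^+ = N, of ∏_{j=1}^K ( {h_j + ∑_{l=j+1}^K ∑_{s=1}^{r_{(l)}} s·n_s^l·m_{l,j} ; n_0^j, n_1^j, …, n_{r_{(j)}}^j} · ∏_{s=1}^{r_{(j)}} z_{j,s}^{n_s^j} ). -/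

import Mathlib

/-!
Write `L_l = 1 + x_l` with `x_l = ∑_{s=1}^{r_{(l)}} z_{l,s} M_l^s` and
`M_l = u^{c_l⁺} ∏_{j<l} L_j^{m_{l,j}}`. Since `c_l⁺ ≠ 0`, `M_l` has no constant term, so `L_l^h` is
the binomial series `∑_m C(h,m) x_l^m` substituted into `x_l`, and the multinomial theorem expands
`x_l^m`. A family `(n_0, n_1, …, n_r)` with `n_0 = n_1 + ⋯ + n_r` records the pair
`(m, (n_s)_{s ≥ 1})`, and `{h; n_0, …, n_r}` is exactly its binomial-times-multinomial weight.

Peel off the last factor `L_K^{h_K}`: with `w = ∑_s s·n_s^K`, the power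
`M_K^w = u^{w c_K⁺} ∏_{j<K} L_j^{w m_{K,j}}` lowers the target degree by `w c_K⁺` and raises each
remaining exponent `h_j` by `w m_{K,j}`, which is the correction inside the brackets. Induction on
`K`, for arbitrary exponents, concludes. As every `c_j⁺ ≠ 0`, only boundedly many families
contribute to a given `u^N`, so all sums are finite.
-/

open Classical

noncomputable section

/-- The generalized binomial coefficient `C(h,m) = h(h-1)⋯(h-m+1)/m!` for `h ∈ ℤ`
(the division is exact). -/
def intChoose (h : ℤ) (m : ℕ) : ℤ :=
  (∏ j ∈ Finset.range m, (h - (j : ℤ))) / (m.factorial : ℤ)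

/-- The bracket `{h; n_0, n_1, …, n_p} = C(h,n_0)·M(n_0; n_1,…,n_p)`, where
`M(n_0; n_1,…,n_p) = n_0!/(n_1!⋯n_p!)` if `n_0 = n_1+⋯+n_p` and `0` otherwise. -/
def gbracket (h : ℤ) (p : ℕ) (ns : ℕ → ℕ) : ℤ :=
  if ns 0 = ∑ s ∈ Finset.Icc 1 p, ns s then
    intChoose h (ns 0) * Nat.multinomial (Finset.Icc 1 p) ns
  else 0

/-- The coefficient ring `A = ℚ[z_{j,s} : 1 ≤ j ≤ K, 1 ≤ s ≤ r_{(j)}-1]`. -/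
abbrev ZRing (K : ℕ) (rr : Fin K → ℕ) : Type :=
  MvPolynomial ((j : Fin K) × Fin (rr j - 1)) ℚ

/-- `z_{j,s}` for `0 ≤ s ≤ r_{(j)}`, with the convention `z_{j,0} = z_{j,r_{(j)}} = 1`. -/
def zpoly {K : ℕ} (rr : Fin K → ℕ) (j : Fin K) (s : ℕ) : ZRing K rr :=
  if h : 0 < s ∧ s < rr j then MvPolynomial.X ⟨j, ⟨s - 1, by omega⟩⟩ else 1

open Finset

theorem intChoose_eq_ringChoose (h : ℤ) (m : ℕ) : intChoose h m = Ring.choose h m := by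
  have hprod : (descPochhammer ℤ m).eval h = ∏ j ∈ range m, (h - (j : ℤ)) := by
    induction m with
    | zero => simp
    | succ m ih => rw [descPochhammer_succ_eval, ih, prod_range_succ]
  have hfac := Ring.descPochhammer_eq_factorial_smul_choose (R := ℤ) h m
  rw [← Polynomial.eval_eq_smeval, hprod, nsmul_eq_mul] at hfac
  rw [intChoose, hfac]
  exact Int.mul_ediv_cancel_left _ (by exact_mod_cast m.factorial_ne_zero)

def weightedSum (r : ℕ) (g : ℕ → ℕ) : ℕ := ∑ s ∈ Icc 1 r, s * g s

theorem sum_Icc_le_weightedSum (r : ℕ) (g : ℕ → ℕ) : ∑ s ∈ Icc 1 r, g s ≤ weightedSum r g :=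
  sum_le_sum fun _ hs => Nat.le_mul_of_pos_left _ (mem_Icc.1 hs).1

theorem sum_mul_pow_pow_eq_sum_piAntidiag {S : Type*} [CommSemiring S] (a : ℕ → S) (y : S)
    (r m : ℕ) :
    (∑ s ∈ Icc 1 r, a s * y ^ s) ^ m = ∑ ν ∈ piAntidiag (Icc 1 r) m,
      (Nat.multinomial (Icc 1 r) ν : S) * (∏ s ∈ Icc 1 r, a s ^ ν s) * y ^ weightedSum r ν := by
  rw [sum_pow_eq_sum_piAntidiag]
  refine sum_congr rfl fun ν _ => ?_
  simp only [mul_pow, ← pow_mul, prod_mul_distrib, prod_pow_eq_pow_sum, weightedSum, mul_assoc]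

theorem apply_eq_zero_of_mem_piAntidiag {r m s : ℕ} {ν : ℕ → ℕ}
    (hν : ν ∈ piAntidiag (Icc 1 r) m) (hs : s ∉ Icc 1 r) : ν s = 0 :=
  by_contra fun hne => hs ((mem_piAntidiag.1 hν).2 s hne)

theorem gbracket_update_zero (h : ℤ) {r m : ℕ} {ν : ℕ → ℕ} (hν : ν ∈ piAntidiag (Icc 1 r) m) :
    gbracket h r (Function.update ν 0 m) = Ring.choose h m * Nat.multinomial (Icc 1 r) ν := by
  have hIcc : ∀ s ∈ Icc 1 r, Function.update ν 0 m s = ν s := fun s hs =>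
    Function.update_of_ne (by have := (mem_Icc.1 hs).1; omega) _ _
  rw [gbracket, if_pos, Nat.multinomial_congr hIcc]
  · simp [intChoose_eq_ringChoose]
  · rw [sum_congr rfl hIcc, (mem_piAntidiag.1 hν).1]
    simp

theorem update_zero_mem_piAntidiag {r : ℕ} {g : ℕ → ℕ} (hg : ∀ s, r < s → g s = 0)
    (h0 : g 0 = ∑ s ∈ Icc 1 r, g s) : Function.update g 0 0 ∈ piAntidiag (Icc 1 r) (g 0) := by
  refine mem_piAntidiag.2 ⟨?_, fun s hs => ?_⟩
  · rw [h0]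
    exact sum_congr rfl fun s hs =>
      Function.update_of_ne (by have := (mem_Icc.1 hs).1; omega) _ _
  · have hs0 : s ≠ 0 := fun h => hs (by simp [h])
    rw [Function.update_of_ne hs0] at hs
    exact mem_Icc.2 ⟨Nat.pos_of_ne_zero hs0, by by_contra hr; exact hs (hg s (by omega))⟩

/-- The bracket forces the entry `g 0` of a family to be `∑_{s ≥ 1} g s`, so a sum over families
is the double sum over `m = g 0` and `ν = (g 1, …, g r)`, i.e. over binomial and multinomial
expansions. -/
theorem finsum_gbracket_mul {A : Type*} [CommRing A] (h : ℤ) (r D : ℕ) (z Φ : ℕ → A)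
    (hΦ : ∀ w, D < w → Φ w = 0) :
    ∑ᶠ g : ℕ → ℕ, (if ∀ s, r < s → g s = 0 then
        (gbracket h r g : A) * ∏ s ∈ Icc 1 r, z s ^ g s else 0) * Φ (weightedSum r g) =
      ∑ m ∈ range (D + 1), ((Ring.choose h m : ℤ) : A) * ∑ ν ∈ piAntidiag (Icc 1 r) m,
        (Nat.multinomial (Icc 1 r) ν : A) * (∏ s ∈ Icc 1 r, z s ^ ν s) *
          Φ (weightedSum r ν) := by
  set T : (ℕ → ℕ) → A := fun g => (if ∀ s, r < s → g s = 0 then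
    (gbracket h r g : A) * ∏ s ∈ Icc 1 r, z s ^ g s else 0) * Φ (weightedSum r g)
  set S := (range (D + 1)).sigma fun m => piAntidiag (Icc 1 r) m
  set φ : (Σ _ : ℕ, ℕ → ℕ) → ℕ → ℕ := fun p => Function.update p.2 0 p.1
  have hφ : ∀ p : Σ _ : ℕ, ℕ → ℕ, ∀ s ≠ 0, φ p s = p.2 s := fun p s hs =>
    Function.update_of_ne hs _ _
  have hT : ∀ p ∈ S, T (φ p) = ((Ring.choose h p.1 : ℤ) : A) *
      ((Nat.multinomial (Icc 1 r) p.2 : A) * (∏ s ∈ Icc 1 r, z s ^ p.2 s) *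
        Φ (weightedSum r p.2)) := by
    intro p hp
    have hν := (mem_sigma.1 hp).2
    have hIcc : ∀ s ∈ Icc 1 r, φ p s = p.2 s := fun s hs =>
      hφ p s (by have := (mem_Icc.1 hs).1; omega)
    have hcond : ∀ s, r < s → φ p s = 0 := fun s hs => by
      rw [hφ p s (by omega), apply_eq_zero_of_mem_piAntidiag hν
        fun hs' => by have := (mem_Icc.1 hs').2; omega]
    have hw : weightedSum r (φ p) = weightedSum r p.2 :=
      sum_congr rfl fun s hs => by rw [hIcc s hs]
    have hz : ∏ s ∈ Icc 1 r, z s ^ φ p s = ∏ s ∈ Icc 1 r, z s ^ p.2 s :=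
      prod_congr rfl fun s hs => by rw [hIcc s hs]
    simp only [T, if_pos hcond, hw, hz, φ, gbracket_update_zero h hν]
    push_cast
    ring
  have hinj : Set.InjOn φ S := by
    intro p hp q hq hpq
    refine Sigma.ext (by simpa [φ] using congrFun hpq 0) (heq_of_eq (funext fun s => ?_))
    rcases eq_or_ne s 0 with rfl | hs
    · rw [apply_eq_zero_of_mem_piAntidiag (mem_sigma.1 hp).2 (by simp),
        apply_eq_zero_of_mem_piAntidiag (mem_sigma.1 hq).2 (by simp)]
    · rw [← hφ p s hs, ← hφ q s hs, hpq]
  have hsupp : Function.support T ⊆ ↑(S.image φ) := by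
    intro g hg
    have hcond : ∀ s, r < s → g s = 0 := by
      by_contra hc; exact hg (by simp only [T, if_neg hc, zero_mul])
    have hδ : g 0 = ∑ s ∈ Icc 1 r, g s := by
      by_contra hδ; exact hg (by simp [T, gbracket, hδ])
    have hD : weightedSum r g ≤ D := by
      by_contra hD; exact hg (by simp only [T, hΦ _ (not_le.1 hD), mul_zero])
    have h0 := sum_Icc_le_weightedSum r g
    exact mem_image.2 ⟨⟨g 0, Function.update g 0 0⟩,
      mem_sigma.2 ⟨mem_range.2 (show g 0 < D + 1 by omega), update_zero_mem_piAntidiag hcond hδ⟩, by simp [φ]⟩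
  rw [finsum_eq_sum_of_support_subset T hsupp, sum_image hinj, sum_congr rfl hT, sum_sigma]
  simp only [mul_sum]

namespace MvPowerSeries

variable {ι A : Type*} [CommRing A]

theorem val_zpow_eq_subst_binomialSeries {x : MvPowerSeries ι A} (hx : constantCoeff x = 0)
    {u : (MvPowerSeries ι A)ˣ} (hu : (u : MvPowerSeries ι A) = 1 + x) (h : ℤ) :
    ((u ^ h : (MvPowerSeries ι A)ˣ) : MvPowerSeries ι A) =
      PowerSeries.subst x (PowerSeries.binomialSeries A h) := by
  have hsubst := PowerSeries.HasSubst.of_constantCoeff_zero hx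
  rw [← PowerSeries.coe_substAlgHom hsubst]
  have hsucc : ∀ k : ℤ, PowerSeries.substAlgHom hsubst (PowerSeries.binomialSeries A (k + 1)) =
      PowerSeries.substAlgHom hsubst (PowerSeries.binomialSeries A k) * u := by
    intro k
    rw [PowerSeries.binomialSeries_add, map_mul, ← Nat.cast_one,
      PowerSeries.binomialSeries_nat, pow_one, map_add, map_one,
      PowerSeries.substAlgHom_X, hu]
  induction h using Int.induction_on with
  | zero => simp
  | succ k ih => rw [zpow_add_one, Units.val_mul, ih, hsucc]
  | pred k ih =>
    rw [← Units.mul_left_inj u, ← hsucc, sub_add_cancel, ← ih, ← Units.val_mul,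
      ← zpow_add_one, sub_add_cancel]

theorem coeff_pow_mul_eq_zero_of_degree_lt {x : MvPowerSeries ι A} (hx : constantCoeff x = 0)
    (Y : MvPowerSeries ι A) {P : ι →₀ ℕ} {m : ℕ} (hm : P.degree < m) :
    coeff P (x ^ m * Y) = 0 := by
  refine coeff_of_lt_order (lt_of_lt_of_le ?_ le_order_mul)
  exact lt_of_lt_of_le (by exact_mod_cast hm)
    (le_add_right (le_order_pow_of_constantCoeff_eq_zero m hx))

theorem coeff_zpow_mul_eq_sum_choose {x : MvPowerSeries ι A} (hx : constantCoeff x = 0)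
    {u : (MvPowerSeries ι A)ˣ} (hu : (u : MvPowerSeries ι A) = 1 + x) (h : ℤ)
    (Y : MvPowerSeries ι A) (P : ι →₀ ℕ) :
    coeff P (((u ^ h : (MvPowerSeries ι A)ˣ) : MvPowerSeries ι A) * Y) =
      ∑ m ∈ range (P.degree + 1), ((Ring.choose h m : ℤ) : A) * coeff P (x ^ m * Y) := by
  have htrunc : ∀ q ≤ P, coeff q ((u ^ h : (MvPowerSeries ι A)ˣ) : MvPowerSeries ι A) =
      ∑ m ∈ range (P.degree + 1), ((Ring.choose h m : ℤ) : A) * coeff q (x ^ m) := by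
    intro q hq
    rw [val_zpow_eq_subst_binomialSeries hx hu,
      PowerSeries.coeff_subst (PowerSeries.HasSubst.of_constantCoeff_zero hx)]
    refine (finsum_eq_sum_of_support_subset (s := range (P.degree + 1)) _
      fun m hm => ?_).trans (by simp [zsmul_eq_mul])
    by_contra hmP
    have hlt : q.degree < m := lt_of_le_of_lt (Finsupp.degree_mono hq) (by simpa using hmP)
    have hzero : coeff q (x ^ m) = 0 := by
      simpa using coeff_pow_mul_eq_zero_of_degree_lt hx 1 hlt
    exact hm (by simp only [hzero, smul_zero])
  rw [coeff_mul, sum_congr rfl fun p hp => by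
      rw [htrunc p.1 (mem_antidiagonal.1 hp ▸ le_self_add), sum_mul], sum_comm]
  simp only [mul_assoc, ← mul_sum, coeff_mul]

theorem coeff_zpow_mul_eq_finsum_gbracket {z : ℕ → A} (hz : z 0 = 1) {M : MvPowerSeries ι A}
    (hM : constantCoeff M = 0) {r : ℕ} {u : (MvPowerSeries ι A)ˣ}
    (hu : (u : MvPowerSeries ι A) = ∑ s ∈ range (r + 1), C (z s) * M ^ s) (h : ℤ)
    (Y : MvPowerSeries ι A) (P : ι →₀ ℕ) :
    coeff P (((u ^ h : (MvPowerSeries ι A)ˣ) : MvPowerSeries ι A) * Y) =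
      ∑ᶠ g : ℕ → ℕ, (if ∀ s, r < s → g s = 0 then
        (gbracket h r g : A) * ∏ s ∈ Icc 1 r, z s ^ g s else 0) *
          coeff P (M ^ weightedSum r g * Y) := by
  set x := ∑ s ∈ Icc 1 r, C (z s) * M ^ s
  have hux : (u : MvPowerSeries ι A) = 1 + x := by
    rw [hu, sum_range_eq_add_Ico _ (Nat.succ_pos r), Nat.succ_eq_add_one,
      Ico_add_one_right_eq_Icc, hz, map_one, pow_zero, mul_one]
  have hx : constantCoeff x = 0 := by
    refine (map_sum _ _ _).trans (sum_eq_zero fun s hs => ?_)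
    rw [map_mul, map_pow, hM, zero_pow (by have := (mem_Icc.1 hs).1; omega), mul_zero]
  rw [finsum_gbracket_mul h r P.degree z (fun w => coeff P (M ^ w * Y))
      (fun w hw => coeff_pow_mul_eq_zero_of_degree_lt hM Y hw),
    coeff_zpow_mul_eq_sum_choose hx hux h Y P]
  refine sum_congr rfl fun m _ => congrArg _ ?_
  rw [sum_mul_pow_pow_eq_sum_piAntidiag (fun s => C (z s)) M r m, sum_mul, map_sum]
  refine sum_congr rfl fun ν _ => ?_
  simp only [← map_natCast (C (σ := ι) (R := A)), ← map_pow, ← map_prod, ← map_mul, mul_assoc,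
    coeff_C_mul]

theorem coeff_monomial_one_mul_equivFunOnFinite [Finite ι] (N e : ι → ℕ)
    (X : MvPowerSeries ι A) :
    coeff (Finsupp.equivFunOnFinite.symm N) (monomial (Finsupp.equivFunOnFinite.symm e) 1 * X) =
      if e ≤ N then coeff (Finsupp.equivFunOnFinite.symm (N - e)) X else 0 := by
  have hle : Finsupp.equivFunOnFinite.symm e ≤ Finsupp.equivFunOnFinite.symm N ↔ e ≤ N := by
    simp [Finsupp.le_def, Pi.le_def]
  have hsub : Finsupp.equivFunOnFinite.symm N - Finsupp.equivFunOnFinite.symm e =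
      Finsupp.equivFunOnFinite.symm (N - e) := by
    ext; simp
  simp only [coeff_monomial_mul, one_mul, hle, hsub]

end MvPowerSeries

theorem Set.finite_setOf_le_and_eq_zero_of_lt (κ : Type*) [Finite κ] (B R : ℕ) :
    {f : κ → ℕ → ℕ | ∀ j s, f j s ≤ B ∧ (R < s → f j s = 0)}.Finite := by
  have hT : {g : ℕ → ℕ | ∀ s, g s ≤ B ∧ (R < s → g s = 0)}.Finite := by
    refine (Set.finite_range fun (v : Fin (R + 1) → Fin (B + 1)) s =>
      if h : s < R + 1 then (v ⟨s, h⟩ : ℕ) else 0).subset fun g hg => ?_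
    refine ⟨fun s => ⟨g s, Nat.lt_succ_of_le (hg s).1⟩, funext fun s => ?_⟩
    by_cases hs : s < R + 1
    · simp [hs]
    · simp [hs, (hg s).2 (by omega)]
  exact (Set.Finite.pi' fun _ => hT).subset fun f hf j s => hf j s

theorem finsum_snoc_eq_finsum {K : ℕ} {β M : Type*} [AddCommMonoid M]
    {F : (Fin (K + 1) → β) → M} (hF : (Function.support F).Finite) :
    ∑ᶠ b, ∑ᶠ f : Fin K → β, F (Fin.snoc f b) = ∑ᶠ f, F f := by
  rw [← finsum_comp_equiv (Fin.snocEquiv fun _ => β), finsum_curry]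
  · rfl
  · exact hF.preimage (Fin.snocEquiv fun _ => β).injective.injOn

section Gupta

open MvPowerSeries

variable {ι A : Type*} [CommRing A]

/-- The summand of the formula, with arbitrary exponents `H` in place of the `h_j`: peeling off
the last factor shifts them. -/
def guptaSummand {K : ℕ} (rr : Fin K → ℕ) (z : Fin K → ℕ → A) (cp : Fin K → ι → ℕ)
    (mm : Fin K → Fin K → ℤ) (H : Fin K → ℤ) (N : ι → ℕ) (f : Fin K → ℕ → ℕ) : A :=
  if (∀ j s, rr j < s → f j s = 0) ∧ ∀ i, ∑ j, weightedSum (rr j) (f j) * cp j i = N i then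
    ∏ j, (gbracket (H j + ∑ l ∈ univ.filter (fun l => j < l),
        (weightedSum (rr l) (f l) : ℤ) * mm l j) (rr j) (f j) : A) *
      ∏ s ∈ Icc 1 (rr j), z j s ^ f j s
  else 0

theorem guptaSummand_support_finite [Fintype ι] {K : ℕ} {rr : Fin K → ℕ} (z : Fin K → ℕ → A)
    {cp : Fin K → ι → ℕ} (hcp : ∀ j, cp j ≠ 0) (mm : Fin K → Fin K → ℤ) (H : Fin K → ℤ)
    (N : ι → ℕ) : (Function.support (guptaSummand rr z cp mm H N)).Finite := by
  refine (Set.finite_setOf_le_and_eq_zero_of_lt (Fin K) (∑ i, N i) (∑ j, rr j)).subset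
    fun f hf => ?_
  have hcond : (∀ j s, rr j < s → f j s = 0) ∧
      ∀ i, ∑ j, weightedSum (rr j) (f j) * cp j i = N i := by
    by_contra hc; exact hf (if_neg hc)
  have hδ : ∀ j, f j 0 = ∑ s ∈ Icc 1 (rr j), f j s := by
    intro j; by_contra hδ
    refine hf ((if_pos hcond).trans (prod_eq_zero (mem_univ j) ?_))
    simp [gbracket, hδ]
  have hweight : ∀ j, weightedSum (rr j) (f j) ≤ ∑ i, N i := by
    intro j
    obtain ⟨i, hi⟩ := Function.ne_iff.1 (hcp j)
    calc weightedSum (rr j) (f j) ≤ weightedSum (rr j) (f j) * cp j i :=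
          Nat.le_mul_of_pos_right _ (Nat.pos_of_ne_zero hi)
      _ ≤ N i := (hcond.2 i).symm ▸ single_le_sum
          (f := fun j => weightedSum (rr j) (f j) * cp j i) (fun _ _ => Nat.zero_le _) (mem_univ j)
      _ ≤ ∑ i, N i := single_le_sum (fun _ _ => Nat.zero_le _) (mem_univ i)
  intro j s
  have hr : rr j ≤ ∑ j, rr j := single_le_sum (fun _ _ => Nat.zero_le _) (mem_univ j)
  have hsum := sum_Icc_le_weightedSum (rr j) (f j)
  refine ⟨?_, fun hs => hcond.1 j s (by omega)⟩
  rcases Nat.eq_zero_or_pos s with rfl | hs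
  · have := hweight j; have := hδ j; omega
  · by_cases hsr : s ≤ rr j
    · have := single_le_sum (fun _ _ => Nat.zero_le _) (mem_Icc.2 ⟨hs, hsr⟩) (f := f j)
        (s := Icc 1 (rr j))
      have := hweight j; omega
    · rw [hcond.1 j s (by omega)]; exact Nat.zero_le _

theorem guptaSummand_snoc {K : ℕ} (rr : Fin (K + 1) → ℕ) (z : Fin (K + 1) → ℕ → A)
    (cp : Fin (K + 1) → ι → ℕ) (mm : Fin (K + 1) → Fin (K + 1) → ℤ) (H : Fin (K + 1) → ℤ)
    (N : ι → ℕ) (f : Fin K → ℕ → ℕ) (g : ℕ → ℕ) :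
    guptaSummand rr z cp mm H N (Fin.snoc f g) =
      (if ∀ s, rr (Fin.last K) < s → g s = 0 then
        (gbracket (H (Fin.last K)) (rr (Fin.last K)) g : A) *
          ∏ s ∈ Icc 1 (rr (Fin.last K)), z (Fin.last K) s ^ g s else 0) *
      (if weightedSum (rr (Fin.last K)) g • cp (Fin.last K) ≤ N then
        guptaSummand (fun j => rr j.castSucc) (fun j => z j.castSucc) (fun j => cp j.castSucc)
          (fun l j => mm l.castSucc j.castSucc)
          (fun j => H j.castSucc + weightedSum (rr (Fin.last K)) g * mm (Fin.last K) j.castSucc)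
          (N - weightedSum (rr (Fin.last K)) g • cp (Fin.last K)) f
      else 0) := by
  have hcond : ((∀ j s, rr j < s → (Fin.snoc f g : Fin (K + 1) → ℕ → ℕ) j s = 0) ∧
      ∀ i, ∑ j, weightedSum (rr j) ((Fin.snoc f g : Fin (K + 1) → ℕ → ℕ) j) * cp j i = N i) ↔
      (∀ s, rr (Fin.last K) < s → g s = 0) ∧ weightedSum (rr (Fin.last K)) g • cp (Fin.last K) ≤ N ∧
        ((∀ j s, rr j.castSucc < s → f j s = 0) ∧
          ∀ i, ∑ j, weightedSum (rr j.castSucc) (f j) * cp j.castSucc i =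
            (N - weightedSum (rr (Fin.last K)) g • cp (Fin.last K)) i) := by
    simp only [Fin.forall_fin_succ', Fin.snoc_castSucc, Fin.snoc_last, Fin.sum_univ_castSucc,
      Pi.le_def, Pi.sub_apply, Pi.smul_apply, smul_eq_mul]
    constructor
    · rintro ⟨⟨hf, hg⟩, hN⟩
      exact ⟨hg, fun i => by have := hN i; omega, hf, fun i => by have := hN i; omega⟩
    · rintro ⟨hg, hle, hf, hN⟩
      exact ⟨⟨hf, hg⟩, fun i => by have := hN i; have := hle i; omega⟩
  have hlast : ∀ F : Fin (K + 1) → ℤ, ∑ l ∈ univ.filter (fun l => Fin.last K < l), F l = 0 :=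
    fun F => sum_eq_zero fun l hl => absurd (mem_filter.1 hl).2 (not_lt.2 (Fin.le_last l))
  have hcast : ∀ (j : Fin K) (F : Fin (K + 1) → ℤ),
      ∑ l ∈ univ.filter (fun l => j.castSucc < l), F l =
        ∑ l ∈ univ.filter (fun l => j < l), F l.castSucc + F (Fin.last K) := by
    intro j F
    rw [sum_filter, sum_filter, Fin.sum_univ_castSucc]
    simp [Fin.castSucc_lt_last]
  unfold guptaSummand
  split_ifs with hc hg hle hc'
  · rw [Fin.prod_univ_castSucc, mul_comm]
    simp only [Fin.snoc_castSucc, Fin.snoc_last, hlast, hcast, add_zero]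
    refine congrArg _ (prod_congr rfl fun j _ => ?_)
    congr 3
    ring
  all_goals first
    | exact absurd (hcond.2 ⟨‹_›, ‹_›, ‹_›⟩) ‹_›
    | exact absurd (hcond.1 ‹_›).1 ‹_›
    | exact absurd (hcond.1 ‹_›).2.1 ‹_›
    | exact absurd (hcond.1 ‹_›).2.2 ‹_›
    | simp

section Recursion

variable [Finite ι]

def guptaBase {K : ℕ} (cp : Fin K → ι → ℕ) (mm : Fin K → Fin K → ℤ)
    (L : Fin K → (MvPowerSeries ι A)ˣ) (l : Fin K) : MvPowerSeries ι A :=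
  monomial (Finsupp.equivFunOnFinite.symm (cp l)) 1 *
    ((∏ j ∈ univ.filter (fun j => j < l), L j ^ mm l j : (MvPowerSeries ι A)ˣ) :
      MvPowerSeries ι A)

def IsGuptaRecursion {K : ℕ} (rr : Fin K → ℕ) (z : Fin K → ℕ → A) (cp : Fin K → ι → ℕ)
    (mm : Fin K → Fin K → ℤ) (L : Fin K → (MvPowerSeries ι A)ˣ) : Prop :=
  ∀ l, (L l : MvPowerSeries ι A) = ∑ s ∈ range (rr l + 1), C (z l s) * guptaBase cp mm L l ^ s

theorem constantCoeff_guptaBase {K : ℕ} {cp : Fin K → ι → ℕ} {l : Fin K} (hcp : cp l ≠ 0)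
    (mm : Fin K → Fin K → ℤ) (L : Fin K → (MvPowerSeries ι A)ˣ) :
    constantCoeff (guptaBase cp mm L l) = 0 := by
  rw [guptaBase, ← coeff_zero_eq_constantCoeff_apply, coeff_monomial_mul, if_neg]
  exact fun hle => hcp (funext fun i => Nat.le_zero.1 (Finsupp.le_def.1 hle i))

theorem guptaBase_last_pow_mul {K : ℕ} (cp : Fin (K + 1) → ι → ℕ)
    (mm : Fin (K + 1) → Fin (K + 1) → ℤ) (L : Fin (K + 1) → (MvPowerSeries ι A)ˣ)
    (H : Fin K → ℤ) (w : ℕ) :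
    guptaBase cp mm L (Fin.last K) ^ w *
        ((∏ j : Fin K, L j.castSucc ^ H j : (MvPowerSeries ι A)ˣ) : MvPowerSeries ι A) =
      monomial (Finsupp.equivFunOnFinite.symm (w • cp (Fin.last K))) 1 *
        ((∏ j : Fin K, L j.castSucc ^ (H j + w * mm (Fin.last K) j.castSucc) :
          (MvPowerSeries ι A)ˣ) : MvPowerSeries ι A) := by
  have hsmul : w • Finsupp.equivFunOnFinite.symm (cp (Fin.last K)) =
      Finsupp.equivFunOnFinite.symm (w • cp (Fin.last K)) := by
    ext; simp
  have hunits : (∏ j ∈ univ.filter (fun j => j < Fin.last K), L j ^ mm (Fin.last K) j) ^ w *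
      ∏ j : Fin K, L j.castSucc ^ H j =
      ∏ j : Fin K, L j.castSucc ^ (H j + w * mm (Fin.last K) j.castSucc) := by
    rw [prod_filter, Fin.prod_univ_castSucc]
    simp only [Fin.castSucc_lt_last, if_true, lt_self_iff_false, if_false, mul_one]
    rw [← prod_pow, ← prod_mul_distrib]
    refine prod_congr rfl fun j _ => ?_
    rw [← zpow_natCast, ← zpow_mul, ← zpow_add, add_comm, mul_comm]
  rw [guptaBase, mul_pow, monomial_pow, one_pow, ← Units.val_pow_eq_pow_val, mul_assoc,
    ← Units.val_mul, hsmul, hunits]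

theorem IsGuptaRecursion.castSucc {K : ℕ} {rr : Fin (K + 1) → ℕ} {z : Fin (K + 1) → ℕ → A}
    {cp : Fin (K + 1) → ι → ℕ} {mm : Fin (K + 1) → Fin (K + 1) → ℤ}
    {L : Fin (K + 1) → (MvPowerSeries ι A)ˣ} (hL : IsGuptaRecursion rr z cp mm L) :
    IsGuptaRecursion (fun j => rr j.castSucc) (fun j => z j.castSucc) (fun j => cp j.castSucc)
      (fun l j => mm l.castSucc j.castSucc) (fun j => L j.castSucc) := by
  intro l
  rw [hL l.castSucc, guptaBase, guptaBase, prod_filter, prod_filter, Fin.prod_univ_castSucc]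
  simp [Fin.castSucc_lt_castSucc_iff, not_lt.2 (Fin.le_last _)]

end Recursion

theorem coeff_prod_zpow_eq_finsum_guptaSummand [Fintype ι] {K : ℕ} {rr : Fin K → ℕ}
    {z : Fin K → ℕ → A} {cp : Fin K → ι → ℕ} {mm : Fin K → Fin K → ℤ}
    {L : Fin K → (MvPowerSeries ι A)ˣ} (hz : ∀ j, z j 0 = 1) (hcp : ∀ j, cp j ≠ 0)
    (hL : IsGuptaRecursion rr z cp mm L) (H : Fin K → ℤ) (N : ι → ℕ) :
    coeff (Finsupp.equivFunOnFinite.symm N)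
        ((∏ j, L j ^ H j : (MvPowerSeries ι A)ˣ) : MvPowerSeries ι A) =
      ∑ᶠ f, guptaSummand rr z cp mm H N f := by
  induction K generalizing N with
  | zero => simp [guptaSummand, coeff_one, Finsupp.ext_iff, eq_comm, finsum_unique]
  | succ K ih =>
    have hIH := ih (fun j => hz j.castSucc) (fun j => hcp j.castSucc) hL.castSucc
    set last := Fin.last K
    set P := ((∏ j : Fin K, L j.castSucc ^ H j.castSucc : (MvPowerSeries ι A)ˣ) :
      MvPowerSeries ι A)
    calc coeff (Finsupp.equivFunOnFinite.symm N)
          ((∏ j, L j ^ H j : (MvPowerSeries ι A)ˣ) : MvPowerSeries ι A)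
        = coeff (Finsupp.equivFunOnFinite.symm N)
            (((L last ^ H last : (MvPowerSeries ι A)ˣ) : MvPowerSeries ι A) * P) := by
          rw [Fin.prod_univ_castSucc, Units.val_mul, mul_comm]
      _ = ∑ᶠ g : ℕ → ℕ, (if ∀ s, rr last < s → g s = 0 then
            (gbracket (H last) (rr last) g : A) * ∏ s ∈ Icc 1 (rr last), z last s ^ g s
            else 0) *
            coeff (Finsupp.equivFunOnFinite.symm N)
              (guptaBase cp mm L last ^ weightedSum (rr last) g * P) :=
          coeff_zpow_mul_eq_finsum_gbracket (hz last)
            (constantCoeff_guptaBase (hcp last) mm L) (hL last) _ _ _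
      _ = ∑ᶠ g, ∑ᶠ f, guptaSummand rr z cp mm H N (Fin.snoc f g) := by
          refine finsum_congr fun g => ?_
          simp only [P, last, guptaSummand_snoc, guptaBase_last_pow_mul,
            coeff_monomial_one_mul_equivFunOnFinite]
          by_cases hle : weightedSum (rr (Fin.last K)) g • cp (Fin.last K) ≤ N
          · simp only [if_pos hle]
            rw [hIH, mul_finsum' _ _ (guptaSummand_support_finite _ (fun j => hcp _) _ _ _)]
          · simp only [if_neg hle, mul_zero, finsum_zero]
      _ = ∑ᶠ f, guptaSummand rr z cp mm H N f :=
          finsum_snoc_eq_finsum (guptaSummand_support_finite z hcp mm H N)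

end Gupta

theorem stmt_17_general (n K : ℕ)
    (idx : ℕ → Fin n) (ε : ℕ → ℤ)
    (hε : ∀ j < K, ε (j + 1) = 1 ∨ ε (j + 1) = -1)
    (C : ℕ → Matrix (Fin n) (Fin n) ℤ)
    -- at each step the c-vector is nonzero and sign-coherent with common sign ε_j
    (hcv : ∀ j < K, (∃ l, C j l (idx (j + 1)) ≠ 0) ∧
      ∀ l, 0 ≤ ε (j + 1) * C j l (idx (j + 1)))
    -- the step data for the power-series setting: `r_{(j)}` and `c_j⁺`
    (rr : Fin K → ℕ)
    (cp : Fin K → Fin n → ℕ)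
    (hcp : ∀ (j : Fin K) (i : Fin n),
      (cp j i : ℤ) = ε ((j : ℕ) + 1) * C (j : ℕ) i (idx ((j : ℕ) + 1)))
    -- the integers `m_{l,j} = (ĉ_l⁺, -d_{(j)}·c_j)_{D₀R}` for `j < l`
    (mm : Fin K → Fin K → ℤ)
    -- the integers `h_j = -(g_K, d_{(j)}·c_j)_{D₀R}`, with `g_K = g_{i_K;K}`
    (hcoef : Fin K → ℤ)
    -- the recursively defined units `L_j`
    (L : Fin K → (MvPowerSeries (Fin n) (ZRing K rr))ˣ)
    (hL : ∀ l : Fin K, (L l : MvPowerSeries (Fin n) (ZRing K rr)) =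
      ∑ s ∈ Finset.range (rr l + 1),
        MvPowerSeries.C (σ := Fin n) (R := ZRing K rr) (zpoly rr l s) *
          (MvPowerSeries.monomial (R := ZRing K rr) (Finsupp.equivFunOnFinite.symm (cp l)) 1 *
            ((∏ j ∈ Finset.univ.filter (fun j => j < l), L j ^ mm l j :
                (MvPowerSeries (Fin n) (ZRing K rr))ˣ) :
              MvPowerSeries (Fin n) (ZRing K rr))) ^ s) :
    ∀ N : Fin n → ℕ,
      MvPowerSeries.coeff (R := ZRing K rr) (Finsupp.equivFunOnFinite.symm N)
        ((∏ j, L j ^ hcoef j : (MvPowerSeries (Fin n) (ZRing K rr))ˣ) :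
          MvPowerSeries (Fin n) (ZRing K rr)) =
      ∑ᶠ f : Fin K → ℕ → ℕ,
        if (∀ (j : Fin K) (s : ℕ), rr j < s → f j s = 0) ∧
            (∀ i : Fin n,
              ∑ j : Fin K, (∑ s ∈ Finset.Icc 1 (rr j), s * f j s) * cp j i = N i) then
          ∏ j : Fin K,
            ((gbracket
                (hcoef j + ∑ l ∈ Finset.univ.filter (fun l => j < l),
                  (∑ s ∈ Finset.Icc 1 (rr l), (s : ℤ) * (f l s : ℤ)) * mm l j)
                (rr j) (f j) : ℤ) : ZRing K rr) *
              ∏ s ∈ Finset.Icc 1 (rr j), zpoly rr j s ^ f j s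
        else 0 := by
  intro N
  have hcp0 : ∀ j : Fin K, cp j ≠ 0 := by
    intro j hj
    obtain ⟨⟨l, hl⟩, -⟩ := hcv j j.isLt
    have hεC : ε (j + 1) * C j l (idx (j + 1)) = 0 := by simpa [hj] using (hcp j l).symm
    rcases hε j j.isLt with h | h <;> rw [h] at hεC <;> omega
  rw [coeff_prod_zpow_eq_finsum_guptaSummand (z := zpoly rr) (mm := mm) (L := L)
    (fun j => by simp [zpoly]) hcp0 hL]
  refine finsum_congr fun f => ?_
  simp only [guptaSummand, weightedSum, Nat.cast_sum, Nat.cast_mul]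

/-- **sum form of Gupta's formula.** For a generalized cluster pattern
(the step-`j` data being `r_{(j)} = r_{i_j}`, `c_j⁺`, `ĉ_j⁺ = B₀·c_j⁺`,
`m_{l,j} = (ĉ_l⁺, -d_{(j)}·c_j)_{D₀R}` and `h_j = -(g_K, d_{(j)}·c_j)_{D₀R}`, all assumed
integral), the coefficient of `u^N` in `∏_j L_j^{h_j}` — which represents the
`F`-polynomial `F_{i_K;t_K}(ŷ,z)` by Gupta's formula — equals the (finitely supported)
sum over all families `(n_s^j)` with `∑_j (∑_s s·n_s^j)·c_j⁺ = N` of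
`∏_j {h_j + ∑_{l>j} ∑_s s·n_s^l·m_{l,j}; n_0^j,…,n_{r_{(j)}}^j}·∏_s z_{j,s}^{n_s^j}`. -/
theorem stmt_17 (n K : ℕ) (hn : 1 ≤ n) (hK : 1 ≤ K)
    (r : Fin n → ℕ) (hr : ∀ i, 0 < r i)
    (B₀ : Matrix (Fin n) (Fin n) ℤ)
    (D₀ : Fin n → ℤ) (hD₀ : ∀ i, 0 < D₀ i)
    (hskew : ∀ i j, D₀ i * (r i : ℤ) * B₀ i j = -(D₀ j * (r j : ℤ) * B₀ j i))
    (idx : ℕ → Fin n) (ε : ℕ → ℤ)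
    (hε : ∀ j < K, ε (j + 1) = 1 ∨ ε (j + 1) = -1)
    (B C G : ℕ → Matrix (Fin n) (Fin n) ℤ)
    (hB0 : B 0 = B₀) (hC0 : C 0 = 1) (hG0 : G 0 = 1)
    -- at each step the c-vector is nonzero and sign-coherent with common sign ε_j
    (hcv : ∀ j < K, (∃ l, C j l (idx (j + 1)) ≠ 0) ∧
      ∀ l, 0 ≤ ε (j + 1) * C j l (idx (j + 1)))
    (hB : ∀ j < K, ∀ (a b : Fin n),
      B (j + 1) a b =
        if a = idx (j + 1) ∨ b = idx (j + 1) then -(B j a b)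
        else B j a b + (r (idx (j + 1)) : ℤ) *
          (max (-(B j a (idx (j + 1)))) 0 * B j (idx (j + 1)) b
            + B j a (idx (j + 1)) * max (B j (idx (j + 1)) b) 0))
    (hC : ∀ j < K, ∀ (a b : Fin n),
      C (j + 1) a b =
        if b = idx (j + 1) then -(C j a b)
        else C j a b + (r (idx (j + 1)) : ℤ) *
          (C j a (idx (j + 1)) * max (ε (j + 1) * B j (idx (j + 1)) b) 0
            + max (-(ε (j + 1) * C j a (idx (j + 1)))) 0 * B j (idx (j + 1)) b))
    (hG : ∀ j < K, ∀ (l i : Fin n),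
      G (j + 1) l i =
        if i = idx (j + 1) then
          -(G j l i) + (r (idx (j + 1)) : ℤ) *
            ∑ p, max (-(ε (j + 1) * B j p (idx (j + 1)))) 0 * G j l p
        else G j l i)
    -- the step data for the power-series setting: `r_{(j)}` and `c_j⁺`
    (rr : Fin K → ℕ) (hrr : ∀ j : Fin K, rr j = r (idx ((j : ℕ) + 1)))
    (cp : Fin K → Fin n → ℕ)
    (hcp : ∀ (j : Fin K) (i : Fin n),
      (cp j i : ℤ) = ε ((j : ℕ) + 1) * C (j : ℕ) i (idx ((j : ℕ) + 1)))
    -- the integers `m_{l,j} = (ĉ_l⁺, -d_{(j)}·c_j)_{D₀R}` for `j < l`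
    (mm : Fin K → Fin K → ℤ)
    (hmm : ∀ (l j : Fin K), j < l →
      mm l j * (D₀ (idx ((j : ℕ) + 1)) * (r (idx ((j : ℕ) + 1)) : ℤ)) =
        -(∑ i, B₀.mulVec (fun i' => (cp l i' : ℤ)) i * (D₀ i * (r i : ℤ)) *
            C (j : ℕ) i (idx ((j : ℕ) + 1))))
    -- the integers `h_j = -(g_K, d_{(j)}·c_j)_{D₀R}`, with `g_K = g_{i_K;K}`
    (hcoef : Fin K → ℤ)
    (hhcoef : ∀ j : Fin K,
      hcoef j * (D₀ (idx ((j : ℕ) + 1)) * (r (idx ((j : ℕ) + 1)) : ℤ)) =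
        -(∑ i, G K i (idx K) * (D₀ i * (r i : ℤ)) * C (j : ℕ) i (idx ((j : ℕ) + 1))))
    -- the recursively defined units `L_j`
    (L : Fin K → (MvPowerSeries (Fin n) (ZRing K rr))ˣ)
    (hL : ∀ l : Fin K, (L l : MvPowerSeries (Fin n) (ZRing K rr)) =
      ∑ s ∈ Finset.range (rr l + 1),
        MvPowerSeries.C (σ := Fin n) (R := ZRing K rr) (zpoly rr l s) *
          (MvPowerSeries.monomial (R := ZRing K rr) (Finsupp.equivFunOnFinite.symm (cp l)) 1 *
            ((∏ j ∈ Finset.univ.filter (fun j => j < l), L j ^ mm l j :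
                (MvPowerSeries (Fin n) (ZRing K rr))ˣ) :
              MvPowerSeries (Fin n) (ZRing K rr))) ^ s) :
    ∀ N : Fin n → ℕ,
      MvPowerSeries.coeff (R := ZRing K rr) (Finsupp.equivFunOnFinite.symm N)
        ((∏ j, L j ^ hcoef j : (MvPowerSeries (Fin n) (ZRing K rr))ˣ) :
          MvPowerSeries (Fin n) (ZRing K rr)) =
      ∑ᶠ f : Fin K → ℕ → ℕ,
        if (∀ (j : Fin K) (s : ℕ), rr j < s → f j s = 0) ∧
            (∀ i : Fin n,
              ∑ j : Fin K, (∑ s ∈ Finset.Icc 1 (rr j), s * f j s) * cp j i = N i) then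
          ∏ j : Fin K,
            ((gbracket
                (hcoef j + ∑ l ∈ Finset.univ.filter (fun l => j < l),
                  (∑ s ∈ Finset.Icc 1 (rr l), (s : ℤ) * (f l s : ℤ)) * mm l j)
                (rr j) (f j) : ℤ) : ZRing K rr) *
              ∏ s ∈ Finset.Icc 1 (rr j), zpoly rr j s ^ f j s
        else 0 :=
  stmt_17_general n K idx ε hε C hcv rr cp hcp mm hcoef L hL
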